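/- arXiv:2208.01994 — 2 statements merged into one kernel-verified Lean document; each statement's English description precedes it below -/
import Mathlib

section
/- Suppose there is a sequence (a_k)_{k∈ℕ} of nonnegative real numbers with limsup_{k→∞} a_k = 1 such that, for all sufficiently large k and every 1 ≤ j ≤ N_k, one has ∫_X |s_{k,j}|² dμ ≤ a_k ∫_K |s_{k,j}|² dμ. Then limsup_{k→∞} k^{-n} N_k ≤ ∫_K f dμ. (This is the measure-theoretic content of the paper's Proposition 3.1 on L² weak Morse inequalities, applied to an orthonormal basis of the harmonic space.) -/
open MeasureTheory Filter Topology

/-!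
Summing `∫_X |s_{k,j}|² ≤ a_k ∫_K |s_{k,j}|²` over `j` gives `k⁻ⁿ N_k ≤ a_k ∫_K k⁻ⁿ B_k`
for large `k`. On the finite-measure set `K` the functions `k⁻ⁿ B_k` are nonnegative and
eventually bounded by `C`, so the reverse Fatou lemma gives
`limsup ∫_K k⁻ⁿ B_k ≤ ∫_K limsup k⁻ⁿ B_k ≤ ∫_K f`, and `limsup a_k = 1` finishes the argument.
-/

namespace MeasureTheory

variable {α : Type*} [MeasurableSpace α] {μ : Measure α}

theorem isBoundedUnder_le_integral_of_norm_le [IsFiniteMeasure μ] {ι : Type*} {l : Filter ι}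
    {g : ι → α → ℝ} {C : ℝ} (hg : ∀ᶠ k in l, ∀ᵐ x ∂μ, ‖g k x‖ ≤ C) :
    IsBoundedUnder (· ≤ ·) l fun k => ∫ x, g k x ∂μ :=
  ⟨C * μ.real Set.univ, eventually_map.2 <| hg.mono fun _ hk =>
    (Real.le_norm_self _).trans (norm_integral_le_of_norm_le_const hk)⟩

theorem limsup_integral_le_integral_of_le_const [IsFiniteMeasure μ] {g : ℕ → α → ℝ}
    {f : α → ℝ} {C : ℝ} (hg_meas : ∀ k, Measurable (g k)) (hg_nonneg : ∀ k, 0 ≤ᵐ[μ] g k)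
    (hg_le : ∀ k, ∀ᵐ x ∂μ, g k x ≤ C) (hf : Integrable f μ)
    (hlim : ∀ᵐ x ∂μ, limsup (fun k => g k x) atTop ≤ f x) :
    limsup (fun k => ∫ x, g k x ∂μ) atTop ≤ ∫ x, f x ∂μ := by
  have hg_norm : ∀ k, ∀ᵐ x ∂μ, ‖g k x‖ ≤ C := fun k =>
    (hg_nonneg k).mp <| (hg_le k).mono fun x hC h0 => (Real.norm_of_nonneg h0).trans_le hC
  have hg_int : ∀ k, Integrable (g k) μ := fun k =>
    .of_bound (hg_meas k).aestronglyMeasurable C (hg_norm k)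
  have hlim_ofReal :
      ∀ᵐ x ∂μ, limsup (fun k => ENNReal.ofReal (g k x)) atTop ≤ ENNReal.ofReal (f x) := by
    filter_upwards [ae_all_iff.2 hg_nonneg, ae_all_iff.2 hg_le, hlim] with x h0 hC hx
    refine (ENNReal.ofReal_mono.map_limsup_of_continuousAt _
      ENNReal.continuous_ofReal.continuousAt ⟨C, eventually_map.2 (.of_forall hC)⟩
      (isCoboundedUnder_le_of_le atTop h0)).symm.trans_le ?_
    exact ENNReal.ofReal_le_ofReal hx
  have hf_nonneg : 0 ≤ᵐ[μ] f := by
    filter_upwards [ae_all_iff.2 hg_nonneg, ae_all_iff.2 hg_le, hlim] with x h0 hC hx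
    exact (le_limsup_of_frequently_le (.of_forall h0)
      ⟨C, eventually_map.2 (.of_forall hC)⟩).trans hx
  have hfatou : limsup (fun k => ∫⁻ x, ENNReal.ofReal (g k x) ∂μ) atTop
      ≤ ENNReal.ofReal (∫ x, f x ∂μ) := by
    rw [ofReal_integral_eq_lintegral_ofReal hf hf_nonneg]
    have hC_fin : ∫⁻ _, ENNReal.ofReal C ∂μ ≠ ⊤ := by
      rw [lintegral_const]
      exact ENNReal.mul_ne_top ENNReal.ofReal_ne_top (measure_ne_top _ _)
    refine (limsup_lintegral_le _ (fun k => (hg_meas k).ennreal_ofReal)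
      (fun k => (hg_le k).mono fun _ hx => ENNReal.ofReal_le_ofReal hx) hC_fin).trans ?_
    exact lintegral_mono_ae hlim_ofReal
  rw [← ENNReal.ofReal_le_ofReal_iff (integral_nonneg_of_ae hf_nonneg),
    ENNReal.ofReal_mono.map_limsup_of_continuousAt _ ENNReal.continuous_ofReal.continuousAt
      (isBoundedUnder_le_integral_of_norm_le (.of_forall hg_norm))
      (isCoboundedUnder_le_of_le atTop fun k => integral_nonneg_of_ae (hg_nonneg k))]
  simpa only [Function.comp_def, ofReal_integral_eq_lintegral_ofReal (hg_int _) (hg_nonneg _)]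
    using hfatou

theorem limsup_integral_le_integral_of_eventually_le_const [IsFiniteMeasure μ]
    {g : ℕ → α → ℝ} {f : α → ℝ} {C : ℝ} (hg_meas : ∀ k, Measurable (g k))
    (hg_nonneg : ∀ k, 0 ≤ᵐ[μ] g k) (hg_le : ∀ᶠ k in atTop, ∀ᵐ x ∂μ, g k x ≤ C)
    (hf : Integrable f μ) (hlim : ∀ᵐ x ∂μ, limsup (fun k => g k x) atTop ≤ f x) :
    limsup (fun k => ∫ x, g k x ∂μ) atTop ≤ ∫ x, f x ∂μ := by
  obtain ⟨k₀, hk₀⟩ := eventually_atTop.1 hg_le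
  rw [← limsup_nat_add _ k₀]
  refine limsup_integral_le_integral_of_le_const (g := fun k => g (k + k₀))
    (fun k => hg_meas _) (fun k => hg_nonneg _) (fun k => hk₀ _ (Nat.le_add_left _ _)) hf ?_
  filter_upwards [hlim] with x hx
  rwa [limsup_nat_add (fun k => g k x) k₀]

theorem card_le_mul_integral_sum {ι : Type*} [Fintype ι] {ν : Measure α} {φ : ι → α → ℝ}
    {a : ℝ} (hφ : ∀ j, ∫ x, φ j x ∂μ = 1) (hφν : ∀ j, Integrable (φ j) ν)
    (hest : ∀ j, ∫ x, φ j x ∂μ ≤ a * ∫ x, φ j x ∂ν) :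
    (Fintype.card ι : ℝ) ≤ a * ∫ x, ∑ j, φ j x ∂ν :=
  calc (Fintype.card ι : ℝ) = ∑ j, ∫ x, φ j x ∂μ := by simp [hφ]
    _ ≤ ∑ j, a * ∫ x, φ j x ∂ν := Finset.sum_le_sum fun j _ => hest j
    _ = a * ∫ x, ∑ j, φ j x ∂ν := by
      rw [← Finset.mul_sum, integral_finsetSum _ fun j _ => hφν j]

end MeasureTheory

theorem Real.limsup_le_of_eventually_le_mul {ι : Type*} {l : Filter ι} [l.NeBot]
    {u a v : ι → ℝ} {L : ℝ} (hu : ∀ k, 0 ≤ u k) (ha0 : ∀ k, 0 ≤ a k) (ha : limsup a l = 1)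
    (hv0 : ∀ k, 0 ≤ v k) (hv_bdd : IsBoundedUnder (· ≤ ·) l v) (huav : ∀ᶠ k in l, u k ≤ a k * v k)
    (hv : limsup v l ≤ L) : limsup u l ≤ L := by
  have ha_bdd : IsBoundedUnder (· ≤ ·) l a := by
    -- the limsup of a real function that is unbounded above is `0` by convention
    by_contra h
    simp [Real.limsup_of_not_isBoundedUnder h] at ha
  calc limsup u l ≤ limsup (a * v) l :=
        limsup_le_limsup huav (isCoboundedUnder_le_of_le l hu)
          (isBoundedUnder_le_mul_of_nonneg (.of_forall ha0) ha_bdd (.of_forall hv0) hv_bdd)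
    _ ≤ limsup a l * limsup v l :=
        limsup_mul_le (.of_forall ha0) ha_bdd (.of_forall hv0) hv_bdd
    _ ≤ L := by rwa [ha, one_mul]

theorem stmt_0_general
    {X : Type*} [MeasurableSpace X] (μ : Measure X)
    (K : Set X) (hK : MeasurableSet K) (hKfin : μ K < ⊤)
    (n : ℕ)
    (N : ℕ → ℕ) (s : (k : ℕ) → Fin (N k) → X → ℂ)
    (hmeas : ∀ k (j : Fin (N k)), Measurable (s k j))
    (hnorm : ∀ k (j : Fin (N k)), ∫ x, ‖s k j x‖ ^ 2 ∂μ = 1)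
    (B : ℕ → X → ℝ)
    (hB : ∀ k x, B k x = ∑ j, ‖s k j x‖ ^ 2)
    (C : ℝ) (k₀ : ℕ)
    (hbound : ∀ k ≥ k₀, ∀ x ∈ K, ((k : ℝ) ^ n)⁻¹ * B k x ≤ C)
    (f : X → ℝ) (hf : IntegrableOn f K μ)
    (hlim : ∀ x ∈ K, limsup (fun k : ℕ => ((k : ℝ) ^ n)⁻¹ * B k x) atTop ≤ f x)
    (a : ℕ → ℝ) (ha0 : ∀ k, 0 ≤ a k)
    (halim : limsup a atTop = 1)
    (hest : ∀ᶠ k in atTop, ∀ j : Fin (N k),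
      ∫ x, ‖s k j x‖ ^ 2 ∂μ ≤ a k * ∫ x in K, ‖s k j x‖ ^ 2 ∂μ) :
    limsup (fun k : ℕ => ((k : ℝ) ^ n)⁻¹ * (N k : ℝ)) atTop ≤ ∫ x in K, f x ∂μ := by
  have := isFiniteMeasure_restrict.2 hKfin.ne
  set g : ℕ → X → ℝ := fun k x => ((k : ℝ) ^ n)⁻¹ * B k x
  have hg_nonneg : ∀ k x, 0 ≤ g k x := fun k x => by
    simp only [g, hB]; positivity
  have hg_le : ∀ᶠ k in atTop, ∀ᵐ x ∂μ.restrict K, g k x ≤ C :=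
    eventually_atTop.2 ⟨k₀, fun k hk => (ae_restrict_iff' hK).2 (.of_forall (hbound k hk))⟩
  have hN_le : ∀ᶠ k : ℕ in atTop,
      ((k : ℝ) ^ n)⁻¹ * (N k : ℝ) ≤ a k * ∫ x in K, g k x ∂μ := by
    filter_upwards [hest] with k hk
    have hcard := card_le_mul_integral_sum (hnorm k)
      (fun j => (Integrable.of_integral_ne_zero (by simp [hnorm])).integrableOn) hk
    simp only [Fintype.card_fin, ← hB] at hcard
    calc ((k : ℝ) ^ n)⁻¹ * (N k : ℝ)
        ≤ ((k : ℝ) ^ n)⁻¹ * (a k * ∫ x in K, B k x ∂μ) := by gcongr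
      _ = a k * ∫ x in K, g k x ∂μ := by simp only [g, integral_const_mul]; ring
  refine Real.limsup_le_of_eventually_le_mul (fun k => by positivity) ha0 halim
    (fun k => integral_nonneg (hg_nonneg k)) ?_ hN_le ?_
  · exact isBoundedUnder_le_integral_of_norm_le <| hg_le.mono fun k hk =>
      hk.mono fun x hx => (Real.norm_of_nonneg (hg_nonneg k x)).trans_le hx
  · exact limsup_integral_le_integral_of_eventually_le_const
      (fun k => by simp only [g, hB]; fun_prop) (fun k => .of_forall (hg_nonneg k)) hg_le hf
      ((ae_restrict_iff' hK).2 (.of_forall hlim))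

/-- Measure-theoretic content of Proposition 3.1 (L² weak Morse inequalities):
if an orthonormal family satisfies `‖s‖² ≤ a_k ∫_K |s|²` with `limsup a_k = 1`,
then `limsup k⁻ⁿ N_k ≤ ∫_K f`. -/
theorem stmt_0
    {X : Type*} [MeasurableSpace X] (μ : Measure X)
    (K : Set X) (hK : MeasurableSet K) (hKfin : μ K < ⊤)
    (n : ℕ)
    (N : ℕ → ℕ) (s : (k : ℕ) → Fin (N k) → X → ℂ)
    (hmeas : ∀ k (j : Fin (N k)), Measurable (s k j))
    (hnorm : ∀ k (j : Fin (N k)), ∫ x, ‖s k j x‖ ^ 2 ∂μ = 1)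
    (B : ℕ → X → ℝ)
    (hB : ∀ k x, B k x = ∑ j, ‖s k j x‖ ^ 2)
    (C : ℝ) (hC : 0 < C) (k₀ : ℕ)
    (hbound : ∀ k ≥ k₀, ∀ x ∈ K, ((k : ℝ) ^ n)⁻¹ * B k x ≤ C)
    (f : X → ℝ) (hf : IntegrableOn f K μ)
    (hlim : ∀ x ∈ K, limsup (fun k : ℕ => ((k : ℝ) ^ n)⁻¹ * B k x) atTop ≤ f x)
    (a : ℕ → ℝ) (ha0 : ∀ k, 0 ≤ a k)
    (halim : limsup a atTop = 1)
    (hest : ∀ᶠ k in atTop, ∀ j : Fin (N k),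
      ∫ x, ‖s k j x‖ ^ 2 ∂μ ≤ a k * ∫ x in K, ‖s k j x‖ ^ 2 ∂μ) :
    limsup (fun k : ℕ => ((k : ℝ) ^ n)⁻¹ * (N k : ℝ)) atTop ≤ ∫ x in K, f x ∂μ :=
  stmt_0_general μ K hK hKfin n N s hmeas hnorm B hB C k₀ hbound f hf hlim a ha0 halim hest
end

section
/- Suppose there exist constants C₀ > 0 and N₀ ∈ ℕ such that, for all sufficiently large k and every 1 ≤ j ≤ N_k, one has (1 − C₀/k − C₀ k^{-(N₀+1)}) ∫_X |s_{k,j}|² dμ ≤ ∫_K |s_{k,j}|² dμ. Then limsup_{k→∞} k^{-n} N_k ≤ ∫_K f dμ. (This is the measure-theoretic content of the paper's Proposition 4.2 on the asymptotics of the spectral function of low-energy forms: an orthonormal basis of the spectral space of the Kodaira Laplacian with eigenvalues ≤ k^{-N₀} satisfies ‖∂̄s‖² + ‖∂̄*s‖² ≤ k^{-N₀}‖s‖², which together with the optimal fundamental estimate yields exactly this hypothesis.) -/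
open MeasureTheory Filter Topology

/-!
Integrating the pointwise bound `limsup k⁻ⁿ B_k ≤ f` over `K` is a reverse Fatou lemma, valid
because `k⁻ⁿ B_k` is uniformly bounded on the finite-measure set `K`. On the other hand each of
the `N_k` normalized sections keeps at least the fraction `1 - C₀/k - C₀ k^{-(N₀+1)} → 1` of its
mass on `K`, so `(1 - o(1)) k⁻ⁿ N_k ≤ ∫_K k⁻ⁿ B_k`, and the two estimates combine.
-/

theorem tendsto_max_sub_zero_of_limsup_le {ι : Type*} {l : Filter ι} {u : ι → ℝ} {a : ℝ}
    (hu : IsBoundedUnder (· ≤ ·) l u) (hlim : limsup u l ≤ a) :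
    Tendsto (fun k => max (u k - a) 0) l (𝓝 0) := by
  refine tendsto_order.2
    ⟨fun b hb => Eventually.of_forall fun k => hb.trans_le (le_max_right _ _), fun b hb => ?_⟩
  filter_upwards [eventually_lt_of_limsup_lt (hlim.trans_lt (lt_add_of_pos_right a hb)) hu]
    with k hk
  exact max_lt (by linarith) hb

section ReverseFatou

variable {α : Type*} [MeasurableSpace α] {μ : Measure α} [IsFiniteMeasure μ] {g : ℕ → α → ℝ}
  {f : α → ℝ} {C : ℝ}

theorem tendsto_integral_max_sub_zero_of_limsup_le (hg : ∀ k, AEStronglyMeasurable (g k) μ)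
    (hgC : ∀ᶠ k in atTop, ∀ᵐ x ∂μ, ‖g k x‖ ≤ C) (hf : Integrable f μ)
    (hlim : ∀ᵐ x ∂μ, limsup (fun k => g k x) atTop ≤ f x) :
    Tendsto (fun k => ∫ x, max (g k x - f x) 0 ∂μ) atTop (𝓝 0) := by
  obtain ⟨k₀, hk₀⟩ := eventually_atTop.1 hgC
  have hgC' : ∀ᵐ x ∂μ, ∀ k, k₀ ≤ k → ‖g k x‖ ≤ C := ae_all_iff.2 fun k =>
    if hk : k₀ ≤ k then (hk₀ k hk).mono fun _ h _ => h else ae_of_all _ fun _ h => absurd h hk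
  have hdom : ∀ᶠ k in atTop, ∀ᵐ x ∂μ, ‖max (g k x - f x) 0‖ ≤ C + |f x| :=
    hgC.mono fun k hk => hk.mono fun x hx => by
      rw [Real.norm_eq_abs] at hx ⊢
      rw [abs_of_nonneg (le_max_right _ _)]
      exact max_le (by linarith [le_abs_self (g k x), neg_abs_le (f x)])
        (by linarith [abs_nonneg (g k x), abs_nonneg (f x)])
  have hpointwise : ∀ᵐ x ∂μ, Tendsto (fun k => max (g k x - f x) 0) atTop (𝓝 0) := by
    filter_upwards [hlim, hgC'] with x hx hxC
    exact tendsto_max_sub_zero_of_limsup_le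
      ⟨C, eventually_atTop.2 ⟨k₀, fun k hk => (Real.le_norm_self _).trans (hxC k hk)⟩⟩ hx
  simpa using tendsto_integral_filter_of_dominated_convergence (f := fun _ => 0)
    (fun x => C + |f x|)
    (Eventually.of_forall fun k => ((hg k).sub hf.1).sup aestronglyMeasurable_const)
    hdom ((integrable_const C).add hf.abs) hpointwise

theorem limsup_integral_le_integral_of_limsup_le (hg : ∀ k, AEStronglyMeasurable (g k) μ)
    (hgC : ∀ᶠ k in atTop, ∀ᵐ x ∂μ, ‖g k x‖ ≤ C) (hf : Integrable f μ)
    (hlim : ∀ᵐ x ∂μ, limsup (fun k => g k x) atTop ≤ f x) :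
    limsup (fun k => ∫ x, g k x ∂μ) atTop ≤ ∫ x, f x ∂μ := by
  have hle : ∀ᶠ k in atTop,
      ∫ x, g k x ∂μ ≤ ∫ x, f x ∂μ + ∫ x, max (g k x - f x) 0 ∂μ := by
    filter_upwards [hgC] with k hk
    have hgk : Integrable (g k) μ := (integrable_const C).mono' (hg k) hk
    have hexcess_int : Integrable (fun x => max (g k x - f x) 0) μ := (hgk.sub hf).pos_part
    calc ∫ x, g k x ∂μ ≤ ∫ x, f x + max (g k x - f x) 0 ∂μ :=
          integral_mono hgk (hf.add hexcess_int) fun x => by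
            linarith [le_max_left (g k x - f x) 0]
      _ = _ := integral_add hf hexcess_int
  have hconv : Tendsto (fun k => ∫ x, f x ∂μ + ∫ x, max (g k x - f x) 0 ∂μ) atTop
      (𝓝 (∫ x, f x ∂μ)) := by
    simpa using (tendsto_integral_max_sub_zero_of_limsup_le hg hgC hf hlim).const_add
      (∫ x, f x ∂μ)
  have hcobdd : IsCoboundedUnder (· ≤ ·) atTop fun k => ∫ x, g k x ∂μ := by
    refine isCoboundedUnder_le_of_eventually_le atTop (x := -(C * μ.real Set.univ)) ?_
    filter_upwards [hgC] with k hk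
    exact neg_le_of_abs_le (norm_integral_le_of_norm_le_const hk)
  calc limsup (fun k => ∫ x, g k x ∂μ) atTop
      ≤ limsup (fun k => ∫ x, f x ∂μ + ∫ x, max (g k x - f x) 0 ∂μ) atTop :=
        limsup_le_limsup hle hcobdd hconv.isBoundedUnder_le
    _ = ∫ x, f x ∂μ := hconv.limsup_eq

end ReverseFatou

theorem limsup_le_limsup_of_mul_le {ι : Type*} {l : Filter ι} [l.NeBot] {a b c : ι → ℝ}
    (hc : Tendsto c l (𝓝 1)) (ha : ∀ k, 0 ≤ a k) (hab : ∀ᶠ k in l, c k * a k ≤ b k)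
    (hb : IsBoundedUnder (· ≤ ·) l b) : limsup a l ≤ limsup b l := by
  have hc_pos : ∀ᶠ k in l, 0 < c k := hc.eventually (lt_mem_nhds zero_lt_one)
  have hc_inv : Tendsto (fun k => (c k)⁻¹) l (𝓝 1) := by simpa using hc.inv₀ one_ne_zero
  have hab' : ∀ᶠ k in l, a k ≤ (b * fun k => (c k)⁻¹) k := by
    filter_upwards [hab, hc_pos] with k hk hck
    rw [Pi.mul_apply, le_mul_inv_iff₀ hck, mul_comm]
    exact hk
  have hb_nonneg : ∀ᶠ k in l, 0 ≤ b k := by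
    filter_upwards [hab, hc_pos] with k hk hck
    exact (mul_nonneg hck.le (ha k)).trans hk
  have hc_inv_nonneg : 0 ≤ᶠ[l] fun k => (c k)⁻¹ := hc_pos.mono fun k hk => (inv_pos.2 hk).le
  calc limsup a l ≤ limsup (b * fun k => (c k)⁻¹) l :=
        limsup_le_limsup hab' (isCoboundedUnder_le_of_le l ha)
          (isBoundedUnder_le_mul_of_nonneg hb_nonneg.frequently hb hc_inv_nonneg
            hc_inv.isBoundedUnder_le)
    _ ≤ limsup b l * limsup (fun k => (c k)⁻¹) l :=
        limsup_mul_le hb_nonneg.frequently hb hc_inv_nonneg hc_inv.isBoundedUnder_le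
    _ = limsup b l := by rw [hc_inv.limsup_eq, mul_one]

theorem card_mul_le_integral_sum {α ι : Type*} [MeasurableSpace α] [Fintype ι]
    {μ : Measure α} {φ : ι → α → ℝ} {c : ℝ} (hφ : ∀ j, Integrable (φ j) μ)
    (hc : ∀ j, c ≤ ∫ x, φ j x ∂μ) :
    Fintype.card ι * c ≤ ∫ x, ∑ j, φ j x ∂μ := by
  rw [integral_finsetSum _ fun j _ => hφ j, ← nsmul_eq_mul, ← Finset.card_univ]
  exact Finset.card_nsmul_le_sum _ _ _ fun j _ => hc j

theorem tendsto_one_sub_div_sub_mul_inv_pow (c : ℝ) (m : ℕ) :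
    Tendsto (fun k : ℕ => 1 - c / k - c * ((k : ℝ) ^ (m + 1))⁻¹) atTop (𝓝 1) := by
  have hpow : Tendsto (fun k : ℕ => (k : ℝ) ^ (m + 1)) atTop atTop :=
    (tendsto_pow_atTop m.succ_ne_zero).comp tendsto_natCast_atTop_atTop
  simpa using ((tendsto_const_div_atTop_nhds_zero_nat c).const_sub 1).sub
    (hpow.inv_tendsto_atTop.const_mul c)

theorem stmt_2_general
    {X : Type*} [MeasurableSpace X] (μ : Measure X)
    (K : Set X) (hK : MeasurableSet K) (hKfin : μ K < ⊤)
    (n : ℕ)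
    (N : ℕ → ℕ) (s : (k : ℕ) → Fin (N k) → X → ℂ)
    (hmeas : ∀ k (j : Fin (N k)), Measurable (s k j))
    (hnorm : ∀ k (j : Fin (N k)), ∫ x, ‖s k j x‖ ^ 2 ∂μ = 1)
    (B : ℕ → X → ℝ)
    (hB : ∀ k x, B k x = ∑ j, ‖s k j x‖ ^ 2)
    (C : ℝ) (k₀ : ℕ)
    (hbound : ∀ k ≥ k₀, ∀ x ∈ K, ((k : ℝ) ^ n)⁻¹ * B k x ≤ C)
    (f : X → ℝ) (hf : IntegrableOn f K μ)
    (hlim : ∀ x ∈ K, limsup (fun k : ℕ => ((k : ℝ) ^ n)⁻¹ * B k x) atTop ≤ f x)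
    (C₀ : ℝ) (N₀ : ℕ)
    (hest : ∀ᶠ k in atTop, ∀ j : Fin (N k),
      (1 - C₀ / k - C₀ * ((k : ℝ) ^ (N₀ + 1))⁻¹) * ∫ x, ‖s k j x‖ ^ 2 ∂μ
        ≤ ∫ x in K, ‖s k j x‖ ^ 2 ∂μ) :
    limsup (fun k : ℕ => ((k : ℝ) ^ n)⁻¹ * (N k : ℝ)) atTop ≤ ∫ x in K, f x ∂μ := by
  obtain rfl : B = fun k x => ∑ j, ‖s k j x‖ ^ 2 := funext₂ hB
  have hsq_int : ∀ k j, Integrable (fun x => ‖s k j x‖ ^ 2) μ := fun k j =>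
    .of_integral_ne_zero (by rw [hnorm]; exact one_ne_zero)
  have hgC : ∀ k ≥ k₀, ∀ x ∈ K, ‖((k : ℝ) ^ n)⁻¹ * ∑ j, ‖s k j x‖ ^ 2‖ ≤ C :=
    fun k hk x hx => by
      rw [Real.norm_of_nonneg (by positivity)]
      exact hbound k hk x hx
  have : IsFiniteMeasure (μ.restrict K) := isFiniteMeasure_restrict.2 hKfin.ne
  have hfatou := limsup_integral_le_integral_of_limsup_le
    (fun k => (by fun_prop : Measurable _).aestronglyMeasurable)
    (eventually_atTop.2 ⟨k₀, fun k hk => ae_restrict_of_forall_mem hK (hgC k hk)⟩) hf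
    (ae_restrict_of_forall_mem hK hlim)
  have hcount : ∀ᶠ k : ℕ in atTop,
      (1 - C₀ / k - C₀ * ((k : ℝ) ^ (N₀ + 1))⁻¹) * (((k : ℝ) ^ n)⁻¹ * N k) ≤
        ∫ x in K, ((k : ℝ) ^ n)⁻¹ * ∑ j, ‖s k j x‖ ^ 2 ∂μ := by
    filter_upwards [hest] with k hk
    have hmass := card_mul_le_integral_sum (μ := μ.restrict K)
      (fun j => (hsq_int k j).integrableOn) fun j => by simpa only [hnorm, mul_one] using hk j
    rw [Fintype.card_fin] at hmass
    rw [integral_const_mul, mul_left_comm]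
    exact mul_le_mul_of_nonneg_left (by linarith) (by positivity)
  have hbdd : IsBoundedUnder (· ≤ ·) atTop
      fun k : ℕ => ∫ x in K, ((k : ℝ) ^ n)⁻¹ * ∑ j, ‖s k j x‖ ^ 2 ∂μ :=
    ⟨C * μ.real K, eventually_atTop.2 ⟨k₀, fun k hk =>
      (Real.le_norm_self _).trans (norm_setIntegral_le_of_norm_le_const hKfin (hgC k hk))⟩⟩
  exact (limsup_le_limsup_of_mul_le (tendsto_one_sub_div_sub_mul_inv_pow C₀ N₀)
    (fun k => by positivity) hcount hbdd).trans hfatou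

/-- Measure-theoretic content of Proposition 4.2 (asymptotics of the spectral
function of low-energy forms): if
`(1 - C₀/k - C₀ k^{-(N₀+1)}) ∫_X |s|² ≤ ∫_K |s|²` for an orthonormal family,
then `limsup k⁻ⁿ N_k ≤ ∫_K f`. -/
theorem stmt_2
    {X : Type*} [MeasurableSpace X] (μ : Measure X)
    (K : Set X) (hK : MeasurableSet K) (hKfin : μ K < ⊤)
    (n : ℕ)
    (N : ℕ → ℕ) (s : (k : ℕ) → Fin (N k) → X → ℂ)
    (hmeas : ∀ k (j : Fin (N k)), Measurable (s k j))
    (hnorm : ∀ k (j : Fin (N k)), ∫ x, ‖s k j x‖ ^ 2 ∂μ = 1)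
    (B : ℕ → X → ℝ)
    (hB : ∀ k x, B k x = ∑ j, ‖s k j x‖ ^ 2)
    (C : ℝ) (hC : 0 < C) (k₀ : ℕ)
    (hbound : ∀ k ≥ k₀, ∀ x ∈ K, ((k : ℝ) ^ n)⁻¹ * B k x ≤ C)
    (f : X → ℝ) (hf : IntegrableOn f K μ)
    (hlim : ∀ x ∈ K, limsup (fun k : ℕ => ((k : ℝ) ^ n)⁻¹ * B k x) atTop ≤ f x)
    (C₀ : ℝ) (hC₀ : 0 < C₀) (N₀ : ℕ)
    (hest : ∀ᶠ k in atTop, ∀ j : Fin (N k),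
      (1 - C₀ / k - C₀ * ((k : ℝ) ^ (N₀ + 1))⁻¹) * ∫ x, ‖s k j x‖ ^ 2 ∂μ
        ≤ ∫ x in K, ‖s k j x‖ ^ 2 ∂μ) :
    limsup (fun k : ℕ => ((k : ℝ) ^ n)⁻¹ * (N k : ℝ)) atTop ≤ ∫ x in K, f x ∂μ :=
  stmt_2_general μ K hK hKfin n N s hmeas hnorm B hB C k₀ hbound f hf hlim C₀ N₀ hest
end
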